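/- arXiv:math/0406218 — 3 statements merged into one kernel-verified Lean document; each statement's English description precedes it below -/
import Mathlib

section
/- If X_1 and X_2 are independent random variables with finite second moments, and Y_1 and Y_2 are independent random variables with finite second moments, then d_2²(X_1 + X_2, Y_1 + Y_2) ≤ d_2²(X_1, Y_1) + d_2²(X_2, Y_2), provided E X_1 = E Y_1 and E X_2 = E Y_2. -/
open MeasureTheory ProbabilityTheory Filter
open scoped ENNReal NNReal

noncomputable section

/-- The Mallows `r`-distance between two probability measures on `ℝ`:
the infimum over couplings `π` of `(∫ |x - y|^r dπ)^(1/r)`, valued in `ℝ≥0∞`. -/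
def mallows (r : ℝ) (μ ν : Measure ℝ) : ℝ≥0∞ :=
  (⨅ π ∈ {π : Measure (ℝ × ℝ) | π.map Prod.fst = μ ∧ π.map Prod.snd = ν},
    ∫⁻ p, ENNReal.ofReal (|p.1 - p.2| ^ r) ∂π) ^ (1 / r)


lemma abs_rpow_two (x : ℝ) : |x| ^ (2:ℝ) = x ^ 2 := by
  rw [show (2:ℝ) = ((2:ℕ):ℝ) by norm_num, Real.rpow_natCast, sq_abs]

lemma coupling_exists
    (μ₁ ν₁ μ₂ ν₂ : Measure ℝ)
    [IsProbabilityMeasure μ₁] [IsProbabilityMeasure ν₁]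
    [IsProbabilityMeasure μ₂] [IsProbabilityMeasure ν₂]
    (hμ₁ : MemLp id 2 μ₁) (hν₁ : MemLp id 2 ν₁)
    (hμ₂ : MemLp id 2 μ₂) (hν₂ : MemLp id 2 ν₂)
    (hm₁ : ∫ x, x ∂μ₁ = ∫ x, x ∂ν₁) (hm₂ : ∫ x, x ∂μ₂ = ∫ x, x ∂ν₂)
    (π₁ π₂ : Measure (ℝ × ℝ))
    (h₁f : π₁.map Prod.fst = μ₁) (h₁s : π₁.map Prod.snd = ν₁)
    (h₂f : π₂.map Prod.fst = μ₂) (h₂s : π₂.map Prod.snd = ν₂) :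
    ∃ π : Measure (ℝ × ℝ),
      (π.map Prod.fst = (μ₁.prod μ₂).map (fun q => q.1 + q.2) ∧
       π.map Prod.snd = (ν₁.prod ν₂).map (fun q => q.1 + q.2)) ∧
      ∫⁻ p, ENNReal.ofReal (|p.1 - p.2| ^ (2:ℝ)) ∂π ≤
        ∫⁻ p, ENNReal.ofReal (|p.1 - p.2| ^ (2:ℝ)) ∂π₁ +
        ∫⁻ p, ENNReal.ofReal (|p.1 - p.2| ^ (2:ℝ)) ∂π₂ := by
  have hπ₁prob : IsProbabilityMeasure π₁ := by
    constructor
    rw [← Set.preimage_univ (f := @Prod.fst ℝ ℝ), ← Measure.map_apply measurable_fst .univ, h₁f]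
    exact measure_univ
  have hπ₂prob : IsProbabilityMeasure π₂ := by
    constructor
    rw [← Set.preimage_univ (f := @Prod.fst ℝ ℝ), ← Measure.map_apply measurable_fst .univ, h₂f]
    exact measure_univ
  -- the coordinate functions are in L²
  have hfst₁ : MemLp (fun p : ℝ × ℝ => p.1) 2 π₁ := by
    have := (memLp_map_measure_iff aestronglyMeasurable_id measurable_fst.aemeasurable).mp
      (h₁f ▸ hμ₁)
    exact this
  have hsnd₁ : MemLp (fun p : ℝ × ℝ => p.2) 2 π₁ := by
    have := (memLp_map_measure_iff aestronglyMeasurable_id measurable_snd.aemeasurable).mp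
      (h₁s ▸ hν₁)
    exact this
  have hfst₂ : MemLp (fun p : ℝ × ℝ => p.1) 2 π₂ := by
    have := (memLp_map_measure_iff aestronglyMeasurable_id measurable_fst.aemeasurable).mp
      (h₂f ▸ hμ₂)
    exact this
  have hsnd₂ : MemLp (fun p : ℝ × ℝ => p.2) 2 π₂ := by
    have := (memLp_map_measure_iff aestronglyMeasurable_id measurable_snd.aemeasurable).mp
      (h₂s ▸ hν₂)
    exact this
  set u : ℝ × ℝ → ℝ := fun p => p.1 - p.2 with hu
  have hu₁ : MemLp u 2 π₁ := hfst₁.sub hsnd₁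
  have hu₂ : MemLp u 2 π₂ := hfst₂.sub hsnd₂
  have one_le_two : (1 : ℝ≥0∞) ≤ 2 := by norm_num
  -- mean zero
  have hmean₁ : ∫ p, u p ∂π₁ = 0 := by
    rw [hu]
    rw [integral_sub (hfst₁.integrable one_le_two) (hsnd₁.integrable one_le_two)]
    have e1 : ∫ p : ℝ × ℝ, p.1 ∂π₁ = ∫ x, x ∂μ₁ := by
      rw [← h₁f]
      exact (integral_map (f := fun x : ℝ => x) measurable_fst.aemeasurable
        aestronglyMeasurable_id).symm
    have e2 : ∫ p : ℝ × ℝ, p.2 ∂π₁ = ∫ x, x ∂ν₁ := by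
      rw [← h₁s]
      exact (integral_map (f := fun x : ℝ => x) measurable_snd.aemeasurable
        aestronglyMeasurable_id).symm
    rw [e1, e2, hm₁, sub_self]
  have hmean₂ : ∫ p, u p ∂π₂ = 0 := by
    rw [hu]
    rw [integral_sub (hfst₂.integrable one_le_two) (hsnd₂.integrable one_le_two)]
    have e1 : ∫ p : ℝ × ℝ, p.1 ∂π₂ = ∫ x, x ∂μ₂ := by
      rw [← h₂f]
      exact (integral_map (f := fun x : ℝ => x) measurable_fst.aemeasurable
        aestronglyMeasurable_id).symm
    have e2 : ∫ p : ℝ × ℝ, p.2 ∂π₂ = ∫ x, x ∂ν₂ := by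
      rw [← h₂s]
      exact (integral_map (f := fun x : ℝ => x) measurable_snd.aemeasurable
        aestronglyMeasurable_id).symm
    rw [e1, e2, hm₂, sub_self]
  -- the coupling
  set φ : (ℝ × ℝ) × (ℝ × ℝ) → ℝ × ℝ := fun q => (q.1.1 + q.2.1, q.1.2 + q.2.2) with hφdef
  have hφ : Measurable φ := by fun_prop
  refine ⟨(π₁.prod π₂).map φ, ⟨?_, ?_⟩, ?_⟩
  · rw [Measure.map_map measurable_fst hφ]
    have : (Prod.fst ∘ φ) = (fun r : ℝ × ℝ => r.1 + r.2) ∘ (Prod.map Prod.fst Prod.fst) := rfl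
    rw [this, ← Measure.map_map (by fun_prop) (measurable_fst.prodMap measurable_fst),
      ← Measure.map_prod_map _ _ measurable_fst measurable_fst, h₁f, h₂f]
  · rw [Measure.map_map measurable_snd hφ]
    have : (Prod.snd ∘ φ) = (fun r : ℝ × ℝ => r.1 + r.2) ∘ (Prod.map Prod.snd Prod.snd) := rfl
    rw [this, ← Measure.map_map (by fun_prop) (measurable_snd.prodMap measurable_snd),
      ← Measure.map_prod_map _ _ measurable_snd measurable_snd, h₁s, h₂s]
  · -- cost bound
    rw [lintegral_map (by fun_prop) hφ]
    have hkey : ∀ q : (ℝ × ℝ) × (ℝ × ℝ),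
        ENNReal.ofReal (|(φ q).1 - (φ q).2| ^ (2:ℝ)) =
          ENNReal.ofReal ((u q.1 + u q.2) ^ 2) := by
      intro q
      rw [abs_rpow_two]
      congr 1
      simp only [hφdef, hu]
      ring
    simp only [hkey]
    -- L² on the product
    have hmfst : (π₁.prod π₂).map Prod.fst = π₁ := by simp
    have hmsnd : (π₁.prod π₂).map Prod.snd = π₂ := by simp
    have hU₁ : MemLp (fun q : (ℝ × ℝ) × (ℝ × ℝ) => u q.1) 2 (π₁.prod π₂) := by
      have := (memLp_map_measure_iff
        (f := @Prod.fst (ℝ × ℝ) (ℝ × ℝ)) (g := u) (μ := π₁.prod π₂)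
        (by rw [hmfst]; exact hu₁.1) measurable_fst.aemeasurable).mp (hmfst ▸ hu₁)
      exact this
    have hU₂ : MemLp (fun q : (ℝ × ℝ) × (ℝ × ℝ) => u q.2) 2 (π₁.prod π₂) := by
      have := (memLp_map_measure_iff
        (f := @Prod.snd (ℝ × ℝ) (ℝ × ℝ)) (g := u) (μ := π₁.prod π₂)
        (by rw [hmsnd]; exact hu₂.1) measurable_snd.aemeasurable).mp (hmsnd ▸ hu₂)
      exact this
    have hsum : MemLp (fun q : (ℝ × ℝ) × (ℝ × ℝ) => u q.1 + u q.2) 2 (π₁.prod π₂) :=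
      hU₁.add hU₂
    have hfint : Integrable (fun q : (ℝ × ℝ) × (ℝ × ℝ) => (u q.1 + u q.2) ^ 2) (π₁.prod π₂) :=
      hsum.integrable_sq
    rw [← ofReal_integral_eq_lintegral_ofReal hfint (ae_of_all _ fun q => sq_nonneg _)]
    -- expand the square
    have e1 : Integrable (fun q : (ℝ × ℝ) × (ℝ × ℝ) => u q.1 ^ 2) (π₁.prod π₂) :=
      hU₁.integrable_sq
    have e2 : Integrable (fun q : (ℝ × ℝ) × (ℝ × ℝ) => u q.2 ^ 2) (π₁.prod π₂) :=
      hU₂.integrable_sq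
    have e3 : Integrable (fun q : (ℝ × ℝ) × (ℝ × ℝ) => u q.1 * u q.2) (π₁.prod π₂) :=
      (hu₁.integrable one_le_two).mul_prod (hu₂.integrable one_le_two)
    have hexp : ∫ q, (u q.1 + u q.2) ^ 2 ∂(π₁.prod π₂) =
        (∫ q, u q.1 ^ 2 ∂(π₁.prod π₂)) + (∫ q, u q.2 ^ 2 ∂(π₁.prod π₂)) +
          2 * ∫ q, u q.1 * u q.2 ∂(π₁.prod π₂) := by
      have : (fun q : (ℝ × ℝ) × (ℝ × ℝ) => (u q.1 + u q.2) ^ 2) =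
          fun q => u q.1 ^ 2 + u q.2 ^ 2 + 2 * (u q.1 * u q.2) := by
        funext q; ring
      have e12 : Integrable (fun q : (ℝ × ℝ) × (ℝ × ℝ) => u q.1 ^ 2 + u q.2 ^ 2)
          (π₁.prod π₂) := e1.add e2
      have e32 : Integrable (fun q : (ℝ × ℝ) × (ℝ × ℝ) => 2 * (u q.1 * u q.2))
          (π₁.prod π₂) := e3.const_mul 2
      rw [this, integral_add e12 e32, integral_add e1 e2, integral_const_mul]
    have hcross : ∫ q, u q.1 * u q.2 ∂(π₁.prod π₂) = 0 := by
      rw [integral_prod_mul, hmean₁, hmean₂, mul_zero]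
    have hI1 : ∫ q, u q.1 ^ 2 ∂(π₁.prod π₂) = ∫ p, u p ^ 2 ∂π₁ := by
      have h := integral_prod_mul (μ := π₁) (ν := π₂)
        (fun p : ℝ × ℝ => u p ^ 2) (fun _ : ℝ × ℝ => (1:ℝ))
      simpa using h
    have hI2 : ∫ q, u q.2 ^ 2 ∂(π₁.prod π₂) = ∫ p, u p ^ 2 ∂π₂ := by
      have h := integral_prod_mul (μ := π₁) (ν := π₂)
        (fun _ : ℝ × ℝ => (1:ℝ)) (fun p : ℝ × ℝ => u p ^ 2)
      simpa using h
    rw [hexp, hcross, hI1, hI2, mul_zero, add_zero]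
    rw [ENNReal.ofReal_add (integral_nonneg fun p => sq_nonneg _)
      (integral_nonneg fun p => sq_nonneg _)]
    have c1 : ENNReal.ofReal (∫ p, u p ^ 2 ∂π₁) =
        ∫⁻ p, ENNReal.ofReal (|p.1 - p.2| ^ (2:ℝ)) ∂π₁ := by
      rw [ofReal_integral_eq_lintegral_ofReal hu₁.integrable_sq
        (ae_of_all _ fun p => sq_nonneg _)]
      simp only [abs_rpow_two, hu]
    have c2 : ENNReal.ofReal (∫ p, u p ^ 2 ∂π₂) =
        ∫⁻ p, ENNReal.ofReal (|p.1 - p.2| ^ (2:ℝ)) ∂π₂ := by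
      rw [ofReal_integral_eq_lintegral_ofReal hu₂.integrable_sq
        (ae_of_all _ fun p => sq_nonneg _)]
      simp only [abs_rpow_two, hu]
    rw [c1, c2]

lemma mallows_two_sq (μ ν : Measure ℝ) :
    mallows 2 μ ν ^ 2 =
      ⨅ π ∈ {π : Measure (ℝ × ℝ) | π.map Prod.fst = μ ∧ π.map Prod.snd = ν},
        ∫⁻ p, ENNReal.ofReal (|p.1 - p.2| ^ (2:ℝ)) ∂π := by
  rw [mallows, ← ENNReal.rpow_natCast _ 2, ← ENNReal.rpow_mul]
  norm_num

/-- **Subadditivity of the squared Mallows distance `d₂²`.**  If `X₁ ⟂ X₂` and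
`Y₁ ⟂ Y₂` have finite second moments with `E X₁ = E Y₁` and `E X₂ = E Y₂`, then
`d₂²(X₁+X₂, Y₁+Y₂) ≤ d₂²(X₁,Y₁) + d₂²(X₂,Y₂)`. -/
theorem mallows_two_sq_add_le
    {Ω : Type*} [MeasureSpace Ω] [IsProbabilityMeasure (ℙ : Measure Ω)]
    {Ω' : Type*} [MeasureSpace Ω'] [IsProbabilityMeasure (ℙ : Measure Ω')]
    (X₁ X₂ : Ω → ℝ) (Y₁ Y₂ : Ω' → ℝ)
    (hX₁ : Measurable X₁) (hX₂ : Measurable X₂)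
    (hY₁ : Measurable Y₁) (hY₂ : Measurable Y₂)
    (hXindep : IndepFun X₁ X₂ ℙ) (hYindep : IndepFun Y₁ Y₂ ℙ)
    (hX₁2 : MemLp X₁ 2 ℙ) (hX₂2 : MemLp X₂ 2 ℙ)
    (hY₁2 : MemLp Y₁ 2 ℙ) (hY₂2 : MemLp Y₂ 2 ℙ)
    (hm₁ : ℙ[X₁] = ℙ[Y₁]) (hm₂ : ℙ[X₂] = ℙ[Y₂]) :
    mallows 2 ((ℙ : Measure Ω).map (X₁ + X₂)) ((ℙ : Measure Ω').map (Y₁ + Y₂)) ^ 2 ≤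
      mallows 2 ((ℙ : Measure Ω).map X₁) ((ℙ : Measure Ω').map Y₁) ^ 2 +
        mallows 2 ((ℙ : Measure Ω).map X₂) ((ℙ : Measure Ω').map Y₂) ^ 2 := by
  set μ₁ := (ℙ : Measure Ω).map X₁ with hμ₁def
  set μ₂ := (ℙ : Measure Ω).map X₂ with hμ₂def
  set ν₁ := (ℙ : Measure Ω').map Y₁ with hν₁def
  set ν₂ := (ℙ : Measure Ω').map Y₂ with hν₂def
  have iμ₁ : IsProbabilityMeasure μ₁ := Measure.isProbabilityMeasure_map hX₁.aemeasurable
  have iμ₂ : IsProbabilityMeasure μ₂ := Measure.isProbabilityMeasure_map hX₂.aemeasurable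
  have iν₁ : IsProbabilityMeasure ν₁ := Measure.isProbabilityMeasure_map hY₁.aemeasurable
  have iν₂ : IsProbabilityMeasure ν₂ := Measure.isProbabilityMeasure_map hY₂.aemeasurable
  -- second moments
  have mμ₁ : MemLp id 2 μ₁ :=
    (memLp_map_measure_iff aestronglyMeasurable_id hX₁.aemeasurable).2 hX₁2
  have mμ₂ : MemLp id 2 μ₂ :=
    (memLp_map_measure_iff aestronglyMeasurable_id hX₂.aemeasurable).2 hX₂2
  have mν₁ : MemLp id 2 ν₁ :=
    (memLp_map_measure_iff aestronglyMeasurable_id hY₁.aemeasurable).2 hY₁2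
  have mν₂ : MemLp id 2 ν₂ :=
    (memLp_map_measure_iff aestronglyMeasurable_id hY₂.aemeasurable).2 hY₂2
  -- means
  have em₁ : ∫ x, x ∂μ₁ = ∫ x, x ∂ν₁ := by
    rw [hμ₁def, hν₁def,
      integral_map (f := fun x : ℝ => x) hX₁.aemeasurable aestronglyMeasurable_id,
      integral_map (f := fun x : ℝ => x) hY₁.aemeasurable aestronglyMeasurable_id]
    exact hm₁
  have em₂ : ∫ x, x ∂μ₂ = ∫ x, x ∂ν₂ := by
    rw [hμ₂def, hν₂def,
      integral_map (f := fun x : ℝ => x) hX₂.aemeasurable aestronglyMeasurable_id,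
      integral_map (f := fun x : ℝ => x) hY₂.aemeasurable aestronglyMeasurable_id]
    exact hm₂
  -- laws of sums
  have lawX : (ℙ : Measure Ω).map (X₁ + X₂) = (μ₁.prod μ₂).map (fun q : ℝ × ℝ => q.1 + q.2) := by
    have hp := (indepFun_iff_map_prod_eq_prod_map_map hX₁.aemeasurable hX₂.aemeasurable).mp
      hXindep
    rw [hμ₁def, hμ₂def, ← hp, Measure.map_map (by fun_prop) (hX₁.prodMk hX₂)]
    rfl
  have lawY : (ℙ : Measure Ω').map (Y₁ + Y₂) = (ν₁.prod ν₂).map (fun q : ℝ × ℝ => q.1 + q.2) := by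
    have hp := (indepFun_iff_map_prod_eq_prod_map_map hY₁.aemeasurable hY₂.aemeasurable).mp
      hYindep
    rw [hν₁def, hν₂def, ← hp, Measure.map_map (by fun_prop) (hY₁.prodMk hY₂)]
    rfl
  rw [mallows_two_sq, mallows_two_sq, mallows_two_sq]
  have key : ∀ π₁ ∈ {π : Measure (ℝ × ℝ) | π.map Prod.fst = μ₁ ∧ π.map Prod.snd = ν₁},
      ∀ π₂ ∈ {π : Measure (ℝ × ℝ) | π.map Prod.fst = μ₂ ∧ π.map Prod.snd = ν₂},
      (⨅ π ∈ {π : Measure (ℝ × ℝ) | π.map Prod.fst = (ℙ : Measure Ω).map (X₁ + X₂) ∧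
          π.map Prod.snd = (ℙ : Measure Ω').map (Y₁ + Y₂)},
        ∫⁻ p, ENNReal.ofReal (|p.1 - p.2| ^ (2:ℝ)) ∂π) ≤
        (∫⁻ p, ENNReal.ofReal (|p.1 - p.2| ^ (2:ℝ)) ∂π₁) +
        ∫⁻ p, ENNReal.ofReal (|p.1 - p.2| ^ (2:ℝ)) ∂π₂ := by
    rintro π₁ ⟨h₁f, h₁s⟩ π₂ ⟨h₂f, h₂s⟩
    obtain ⟨π, ⟨hπf, hπs⟩, hc⟩ := coupling_exists μ₁ ν₁ μ₂ ν₂ mμ₁ mν₁ mμ₂ mν₂ em₁ em₂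
      π₁ π₂ h₁f h₁s h₂f h₂s
    refine le_trans (iInf₂_le π ⟨?_, ?_⟩) hc
    · rw [hπf, lawX]
    · rw [hπs, lawY]
  simp_rw [ENNReal.iInf_add, ENNReal.add_iInf]
  exact le_iInf fun π₁ => le_iInf fun h₁ => le_iInf fun π₂ => le_iInf fun h₂ =>
    key π₁ h₁ π₂ h₂
end
end

section
/- Let X be a random variable with mean zero, finite variance σ² > 0, distribution function F_X and continuous density f_X, and let C(X) = inf_{p ∈ (0,1)} σ·f_X(F_X^{-1}(p)) / φ(Φ^{-1}(p)), where φ and Φ are the standard normal density and distribution function. Then C(X)² ≤ σ²/(σ² + m²), where m = F_X^{-1}(1/2) is a median of X. -/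
open MeasureTheory ProbabilityTheory Filter
open scoped ENNReal NNReal

open Set Real
open scoped Topology

noncomputable section


/-- The (left-continuous) quantile function of a distribution function `F`. -/
def quantileFn (F : ℝ → ℝ) (u : ℝ) : ℝ := sInf {x | u ≤ F x}



section Density

variable {g : ℝ → ℝ} {μ : Measure ℝ}

lemma dens_integrable (hg : Continuous g) (hg0 : ∀ x, 0 ≤ g x)
    (hμ : μ = volume.withDensity (fun x => ENNReal.ofReal (g x)))
    [IsProbabilityMeasure μ] : Integrable g := by
  refine ⟨hg.aestronglyMeasurable, ?_⟩
  rw [hasFiniteIntegral_iff_ofReal (ae_of_all _ hg0)]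
  have h1 : (∫⁻ x, ENNReal.ofReal (g x)) = μ Set.univ := by
    rw [hμ, withDensity_apply _ MeasurableSet.univ, Measure.restrict_univ]
  rw [h1, measure_univ]
  exact ENNReal.one_lt_top

lemma dens_cdf_eq (hg : Continuous g) (hg0 : ∀ x, 0 ≤ g x)
    (hμ : μ = volume.withDensity (fun x => ENNReal.ofReal (g x)))
    [IsProbabilityMeasure μ] (x : ℝ) :
    cdf μ x = ∫ t in Iic x, g t := by
  rw [cdf_eq_real, Measure.real, hμ, withDensity_apply _ measurableSet_Iic,
    ← ofReal_integral_eq_lintegral_ofReal ((dens_integrable hg hg0 hμ).restrict)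
      (ae_of_all _ hg0), ENNReal.toReal_ofReal]
  exact integral_nonneg fun t => hg0 t

end Density

section Density2
variable {g : ℝ → ℝ} {μ : Measure ℝ}

lemma dens_cdf_sub (hg : Continuous g) (hg0 : ∀ x, 0 ≤ g x)
    (hμ : μ = volume.withDensity (fun x => ENNReal.ofReal (g x)))
    [IsProbabilityMeasure μ] (a b : ℝ) :
    cdf μ b - cdf μ a = ∫ t in a..b, g t := by
  rw [dens_cdf_eq hg hg0 hμ, dens_cdf_eq hg hg0 hμ,
    intervalIntegral.integral_Iic_sub_Iic ((dens_integrable hg hg0 hμ).restrict)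
      ((dens_integrable hg hg0 hμ).restrict)]

lemma dens_hasDerivAt_cdf (hg : Continuous g) (hg0 : ∀ x, 0 ≤ g x)
    (hμ : μ = volume.withDensity (fun x => ENNReal.ofReal (g x)))
    [IsProbabilityMeasure μ] (x : ℝ) :
    HasDerivAt (cdf μ) (g x) x := by
  have h : HasDerivAt (fun u => ∫ t in (0:ℝ)..u, g t) (g x) x := by
    refine intervalIntegral.integral_hasDerivAt_right
      ((dens_integrable hg hg0 hμ).intervalIntegrable)
      (hg.stronglyMeasurable.stronglyMeasurableAtFilter) hg.continuousAt
  have : (fun u => (∫ t in (0:ℝ)..u, g t) + cdf μ 0) = cdf μ := by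
    ext u
    rw [← dens_cdf_sub hg hg0 hμ 0 u]
    ring
  rw [← this]
  simpa using h.add_const (cdf μ 0)

lemma dens_continuous_cdf (hg : Continuous g) (hg0 : ∀ x, 0 ≤ g x)
    (hμ : μ = volume.withDensity (fun x => ENNReal.ofReal (g x)))
    [IsProbabilityMeasure μ] : Continuous (cdf μ) := by
  have := fun x => (dens_hasDerivAt_cdf hg hg0 hμ x).continuousAt
  exact continuous_iff_continuousAt.2 this

lemma dens_atomless (hμ : μ = volume.withDensity (fun x => ENNReal.ofReal (g x))) (y : ℝ) :
    μ {y} = 0 := by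
  rw [hμ]
  exact withDensity_absolutelyContinuous _ _ (measure_singleton y)

lemma dens_measure_Iio {g : ℝ → ℝ} {μ : Measure ℝ}
    (hμ : μ = volume.withDensity (fun x => ENNReal.ofReal (g x)))
    [IsProbabilityMeasure μ] (y : ℝ) : μ (Iio y) = ENNReal.ofReal (cdf μ y) := by
  have h : μ (Iio y) = μ (Iic y) := by
    refine le_antisymm (measure_mono Iio_subset_Iic_self) ?_
    calc μ (Iic y) = μ (Iio y ∪ {y}) := by rw [Iio_union_right]
    _ ≤ μ (Iio y) + μ {y} := measure_union_le _ _
    _ = μ (Iio y) := by rw [dens_atomless hμ, add_zero]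
  rw [h, ofReal_cdf]

lemma dens_measure_Ioi {g : ℝ → ℝ} {μ : Measure ℝ}
    (hμ : μ = volume.withDensity (fun x => ENNReal.ofReal (g x)))
    [IsProbabilityMeasure μ] (y : ℝ) : μ (Ioi y) = 1 - ENNReal.ofReal (cdf μ y) := by
  rw [← compl_Iic, measure_compl measurableSet_Iic (measure_ne_top μ _), measure_univ,
    ofReal_cdf]

end Density2

section Quantile

/-- For a continuous cdf, the quantile function is a right inverse on (0,1). -/
lemma cdf_quantileFn {μ : Measure ℝ} [IsProbabilityMeasure μ] (hcont : Continuous (cdf μ))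
    {p : ℝ} (hp0 : 0 < p) (hp1 : p < 1) :
    cdf μ (quantileFn (cdf μ) p) = p := by
  set F := ⇑(cdf μ)
  set S : Set ℝ := {x | p ≤ F x} with hS
  have hne : S.Nonempty := by
    have h1 : ∀ᶠ x in atTop, p < F x :=
      (tendsto_cdf_atTop μ).eventually (eventually_gt_nhds hp1)
    obtain ⟨x, hx⟩ := h1.exists
    exact ⟨x, hx.le⟩
  have hbdd : BddBelow S := by
    have h0 : ∀ᶠ x in atBot, F x < p :=
      (tendsto_cdf_atBot μ).eventually (eventually_lt_nhds hp0)
    obtain ⟨a, ha⟩ := Filter.eventually_atBot.mp h0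
    refine ⟨a, fun x hx => ?_⟩
    by_contra hax
    push_neg at hax
    exact absurd hx (not_le.2 (ha x hax.le))
  have hclosed : IsClosed S := isClosed_le continuous_const hcont
  have hmem : sInf S ∈ S := hclosed.csInf_mem hne hbdd
  have hge : p ≤ F (sInf S) := hmem
  have hQ : quantileFn F p = sInf S := rfl
  rw [hQ]
  refine le_antisymm ?_ hge
  by_contra h
  push_neg at h
  have hopen : IsOpen {x | p < F x} := isOpen_lt continuous_const hcont
  obtain ⟨ε, hε, hball⟩ := Metric.isOpen_iff.1 hopen _ h
  have hmem2 : sInf S - ε/2 ∈ S := by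
    have h2 : sInf S - ε/2 ∈ Metric.ball (sInf S) ε := by
      rw [Metric.mem_ball, Real.dist_eq, abs_of_nonpos (by linarith)]
      linarith
    exact le_of_lt (show p < F _ from hball h2)
  have := csInf_le hbdd hmem2
  linarith

end Quantile

section Gauss

local notation "φ" => gaussianPDFReal 0 1
local notation "γ" => gaussianReal 0 1

lemma gauss_dens : (γ : Measure ℝ) = volume.withDensity (fun x => ENNReal.ofReal (φ x)) := by
  rw [gaussianReal_of_var_ne_zero 0 one_ne_zero]
  rfl

lemma gauss_cont : Continuous (φ : ℝ → ℝ) := by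
  unfold gaussianPDFReal
  fun_prop

lemma Phi_strictMono : StrictMono ⇑(cdf γ) := by
  intro x y hxy
  have h : 0 < ∫ t in x..y, φ t := by
    refine intervalIntegral.intervalIntegral_pos_of_pos ?_
      (fun t => gaussianPDFReal_pos 0 1 t one_ne_zero) hxy
    exact (integrable_gaussianPDFReal 0 1).intervalIntegrable
  have := dens_cdf_sub gauss_cont (gaussianPDFReal_nonneg 0 1) gauss_dens x y
  linarith

lemma Phi_zero : cdf γ 0 = 1/2 := by
  have hmap : (γ : Measure ℝ).map (fun x => -x) = γ := by
    have h := gaussianReal_map_const_mul (μ := 0) (v := 1) (-1)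
    have hv : (NNReal.mk ((-1:ℝ)^2) (sq_nonneg _) * 1 : ℝ≥0) = 1 := by
      rw [mul_one]; exact NNReal.eq (by norm_num)
    rw [hv, mul_zero] at h
    simpa [neg_one_mul] using h
  have hatom : (γ : Measure ℝ) {0} = 0 := dens_atomless gauss_dens 0
  have h1 : (γ : Measure ℝ) (Iic 0) = (γ : Measure ℝ) (Ici 0) := by
    conv_lhs => rw [← hmap]
    rw [Measure.map_apply (measurable_neg) measurableSet_Iic]
    congr 1
    ext x
    simp
  have h2 : (γ : Measure ℝ) (Ici 0) = (γ : Measure ℝ) (Ioi 0) := by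
    refine le_antisymm ?_ (measure_mono Ioi_subset_Ici_self)
    calc (γ : Measure ℝ) (Ici 0) = (γ : Measure ℝ) (Ioi 0 ∪ {0}) := by rw [Ioi_union_left]
    _ ≤ (γ : Measure ℝ) (Ioi 0) + (γ : Measure ℝ) {0} := measure_union_le _ _
    _ = (γ : Measure ℝ) (Ioi 0) := by rw [hatom, add_zero]
  have h3 : (γ : Measure ℝ) (Iic 0) + (γ : Measure ℝ) (Ioi 0) = 1 := by
    rw [← measure_union (Iic_disjoint_Ioi le_rfl) measurableSet_Ioi, Iic_union_Ioi, measure_univ]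
  rw [h1, h2] at h3
  have hne : (γ : Measure ℝ) (Ioi 0) ≠ ⊤ := measure_ne_top _ _
  have h5 : ((γ : Measure ℝ) (Ioi 0)).toReal + ((γ : Measure ℝ) (Ioi 0)).toReal = 1 := by
    rw [← ENNReal.toReal_add hne hne, h3]; simp
  rw [cdf_eq_real, Measure.real, h1, h2]
  linarith

lemma Phi_cont : Continuous ⇑(cdf γ) :=
  dens_continuous_cdf gauss_cont (gaussianPDFReal_nonneg 0 1) gauss_dens

lemma Phi_quantile_half : quantileFn (⇑(cdf γ)) (1/2) = 0 := by
  have hset : {x | (1:ℝ)/2 ≤ cdf γ x} = Ici 0 := by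
    ext x
    simp only [mem_setOf_eq, mem_Ici]
    constructor
    · intro h
      by_contra hx
      push_neg at hx
      have h2 := Phi_strictMono hx
      rw [Phi_zero] at h2
      linarith
    · intro h
      rcases eq_or_lt_of_le h with h | h
      · rw [← h, Phi_zero]
      · have h2 := Phi_strictMono h
        rw [Phi_zero] at h2
        linarith
  rw [quantileFn, hset, csInf_Ici]

lemma Phi_quantile_continuousAt {p : ℝ} (hp0 : 0 < p) (hp1 : p < 1) :
    ContinuousAt (quantileFn ⇑(cdf γ)) p := by
  rw [Metric.continuousAt_iff]
  intro ε hε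
  set Q := quantileFn ⇑(cdf γ) with hQdef
  set z := Q p with hz
  have hΦz : cdf γ z = p := cdf_quantileFn Phi_cont hp0 hp1
  have hlt1 : cdf γ (z - ε/2) < p := by
    rw [← hΦz]; exact Phi_strictMono (by linarith)
  have hlt2 : p < cdf γ (z + ε/2) := by
    rw [← hΦz]; exact Phi_strictMono (by linarith)
  refine ⟨min (p - cdf γ (z - ε/2)) (cdf γ (z + ε/2) - p), by
    simp only [lt_min_iff]; constructor <;> linarith, fun {u} hu => ?_⟩
  rw [Real.dist_eq] at hu ⊢
  have habs := abs_lt.1 hu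
  have hmin1 := min_le_left (p - cdf γ (z - ε/2)) (cdf γ (z + ε/2) - p)
  have hmin2 := min_le_right (p - cdf γ (z - ε/2)) (cdf γ (z + ε/2) - p)
  have hu1 : cdf γ (z - ε/2) < u := by linarith
  have hu2 : u < cdf γ (z + ε/2) := by linarith
  have hmem : z + ε/2 ∈ {x | u ≤ cdf γ x} := le_of_lt hu2
  have hbdd : BddBelow {x | u ≤ cdf γ x} := by
    refine ⟨z - ε/2, fun w hw => ?_⟩
    by_contra hww
    push_neg at hww
    have := Phi_strictMono hww
    exact absurd hw (by simp only [mem_setOf_eq]; push_neg; linarith)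
  have hub : Q u ≤ z + ε/2 := csInf_le hbdd hmem
  have hlb : z - ε/2 ≤ Q u := le_csInf ⟨_, hmem⟩ (fun w hw => by
    by_contra hww
    push_neg at hww
    have := Phi_strictMono hww
    have : cdf γ w < u := by linarith
    exact absurd hw (by simp only [mem_setOf_eq]; push_neg; exact this))
  rw [abs_lt]
  constructor <;> [linarith; linarith]

lemma Phi_quantile_hasDerivAt {p : ℝ} (hp0 : 0 < p) (hp1 : p < 1) :
    HasDerivAt (quantileFn ⇑(cdf γ)) (φ (quantileFn ⇑(cdf γ) p))⁻¹ p := by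
  refine HasDerivAt.of_local_left_inverse (Phi_quantile_continuousAt hp0 hp1)
    (dens_hasDerivAt_cdf gauss_cont (gaussianPDFReal_nonneg 0 1) gauss_dens _)
    (ne_of_gt (gaussianPDFReal_pos _ _ _ one_ne_zero)) ?_
  filter_upwards [Ioo_mem_nhds hp0 hp1] with u hu
  exact cdf_quantileFn Phi_cont hu.1 hu.2

end Gauss

lemma quantile_set_nonempty {μ : Measure ℝ} [IsProbabilityMeasure μ] {p : ℝ} (hp1 : p < 1) :
    {x | p ≤ cdf μ x}.Nonempty := by
  have h1 : ∀ᶠ x in atTop, p < cdf μ x :=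
    (tendsto_cdf_atTop μ).eventually (eventually_gt_nhds hp1)
  obtain ⟨x, hx⟩ := h1.exists
  exact ⟨x, hx.le⟩

lemma quantile_set_bddBelow {μ : Measure ℝ} [IsProbabilityMeasure μ] {p : ℝ} (hp0 : 0 < p) :
    BddBelow {x | p ≤ cdf μ x} := by
  have h0 : ∀ᶠ x in atBot, cdf μ x < p :=
    (tendsto_cdf_atBot μ).eventually (eventually_lt_nhds hp0)
  obtain ⟨a, ha⟩ := Filter.eventually_atBot.mp h0
  refine ⟨a, fun x hx => ?_⟩
  by_contra hax
  push_neg at hax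
  exact absurd hx (not_le.2 (ha x hax.le))


lemma sq_exp_integrable : Integrable (fun x : ℝ => x ^ 2 * rexp (-(1/2) * x ^ 2)) := by
  have h := integrable_rpow_mul_exp_neg_mul_sq (by norm_num : (0:ℝ) < 1/2)
    (by norm_num : (-1:ℝ) < 2)
  have h2 : ∀ x : ℝ, x ^ (2:ℝ) = x ^ (2:ℕ) := fun x => by
    rw [show (2:ℝ) = ((2:ℕ):ℝ) by norm_num, Real.rpow_natCast]
  simpa only [h2] using h

lemma exp_integrable : Integrable (fun x : ℝ => rexp (-(1/2) * x ^ 2)) :=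
  integrable_exp_neg_mul_sq (by norm_num : (0:ℝ) < 1/2)

lemma gg_deriv (x : ℝ) : HasDerivAt (fun y : ℝ => -y * rexp (-(1/2) * y ^ 2))
    (x ^ 2 * rexp (-(1/2) * x ^ 2) - rexp (-(1/2) * x ^ 2)) x := by
  have h1 : HasDerivAt (fun y : ℝ => -(1/2) * y ^ 2) (-x) x := by
    have h := (hasDerivAt_pow 2 x).const_mul (-(1/2) : ℝ)
    refine h.congr_deriv ?_
    push_cast
    ring
  have h2 : HasDerivAt (fun y : ℝ => rexp (-(1/2) * y ^ 2))
      (rexp (-(1/2) * x ^ 2) * (-x)) x := h1.exp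
  have h3 := ((hasDerivAt_id x).neg).mul h2
  refine h3.congr_deriv ?_
  simp only [Pi.neg_apply, id_eq]
  ring

lemma gg_tendsto_atTop : Tendsto (fun y : ℝ => -y * rexp (-(1/2) * y ^ 2)) atTop (𝓝 0) := by
  have h := rpow_mul_exp_neg_mul_sq_isLittleO_exp_neg (by norm_num : (0:ℝ) < 1/2) 1
  have hlin : Tendsto (fun x : ℝ => -(1/2) * x) atTop atBot := by
    have h0 := (tendsto_id (α := ℝ) (x := atTop)).const_mul_atTop
      (by norm_num : (0:ℝ) < 1/2)
    have h1 := tendsto_neg_atTop_atBot.comp h0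
    have heq : (fun x : ℝ => -(1/2) * x) = (fun y : ℝ => -y) ∘ (fun x : ℝ => 1/2 * x) := by
      funext x
      simp only [Function.comp_apply]
      ring
    rw [heq]
    exact h1
  have h2 : Tendsto (fun x : ℝ => x ^ (1:ℝ) * rexp (-(1/2) * x ^ 2)) atTop (𝓝 0) :=
    h.trans_tendsto (Real.tendsto_exp_atBot.comp hlin)
  have h3 := h2.neg
  simp only [Real.rpow_one, neg_zero] at h3
  convert h3 using 2
  ring

lemma gg_tendsto_atBot : Tendsto (fun y : ℝ => -y * rexp (-(1/2) * y ^ 2)) atBot (𝓝 0) := by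
  have h := gg_tendsto_atTop.neg
  simp only [neg_zero] at h
  have h2 := h.comp tendsto_neg_atBot_atTop
  have heq : (fun x : ℝ => -x * rexp (-(1/2) * x ^ 2)) =
      (fun y : ℝ => -(-y * rexp (-(1/2) * y ^ 2))) ∘ (fun x : ℝ => -x) := by
    funext x
    simp only [Function.comp_apply, neg_neg]
    ring_nf
  rw [heq]
  exact h2

lemma sq_exp_integral : ∫ x : ℝ, x ^ 2 * rexp (-(1/2) * x ^ 2) = Real.sqrt (2 * π) := by
  set dd := fun x : ℝ => x ^ 2 * rexp (-(1/2) * x ^ 2) - rexp (-(1/2) * x ^ 2) with hdd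
  have hdint : Integrable dd := sq_exp_integrable.sub exp_integrable
  have hIoi : ∫ x in Ioi (0:ℝ), dd x = 0 - (-(0:ℝ) * rexp (-(1/2) * 0 ^ 2)) := by
    refine integral_Ioi_of_hasDerivAt_of_tendsto
      ((gg_deriv 0).continuousAt.continuousWithinAt)
      (fun x _ => gg_deriv x) hdint.integrableOn gg_tendsto_atTop
  have hIic : ∫ x in Iic (0:ℝ), dd x = (-(0:ℝ) * rexp (-(1/2) * 0 ^ 2)) - 0 := by
    refine integral_Iic_of_hasDerivAt_of_tendsto
      ((gg_deriv 0).continuousAt.continuousWithinAt)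
      (fun x _ => gg_deriv x) hdint.integrableOn gg_tendsto_atBot
  have htot : ∫ x : ℝ, dd x = 0 := by
    rw [← intervalIntegral.integral_Iic_add_Ioi hdint.integrableOn hdint.integrableOn, hIoi, hIic]
    ring
  have hsub : ∫ x : ℝ, dd x =
      (∫ x : ℝ, x ^ 2 * rexp (-(1/2) * x ^ 2)) - ∫ x : ℝ, rexp (-(1/2) * x ^ 2) :=
    integral_sub sq_exp_integrable exp_integrable
  have hgauss : ∫ x : ℝ, rexp (-(1/2) * x ^ 2) = Real.sqrt (2 * π) := by
    have := integral_gaussian (1/2)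
    rw [show π / (1/2) = 2 * π by ring] at this
    simpa using this
  rw [htot, hgauss] at hsub
  linarith

local notation "φ" => gaussianPDFReal 0 1
local notation "γ" => gaussianReal 0 1

lemma phi_eq (x : ℝ) : φ x = (Real.sqrt (2 * π))⁻¹ * rexp (-(1/2) * x ^ 2) := by
  unfold gaussianPDFReal
  norm_num
  left
  congr 1
  ring

lemma gauss_sq_integrable : Integrable (fun z : ℝ => z ^ 2) γ := by
  rw [gaussianReal_of_var_ne_zero 0 one_ne_zero]
  have hmeas : Measurable (fun x : ℝ => (φ x).toNNReal) :=
    (measurable_gaussianPDFReal 0 1).real_toNNReal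
  have hdens : (gaussianPDF 0 1) = fun x : ℝ => ((φ x).toNNReal : ℝ≥0∞) := by
    funext x
    rw [gaussianPDF, ENNReal.ofReal]
  rw [hdens, integrable_withDensity_iff_integrable_smul hmeas]
  have heq : (fun x : ℝ => ((φ x).toNNReal : ℝ≥0) • x ^ 2) =
      fun x : ℝ => (Real.sqrt (2 * π))⁻¹ * (x ^ 2 * rexp (-(1/2) * x ^ 2)) := by
    funext x
    rw [NNReal.smul_def, Real.coe_toNNReal _ (gaussianPDFReal_nonneg 0 1 x), smul_eq_mul,
      phi_eq]
    ring
  rw [heq]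
  exact sq_exp_integrable.const_mul _

lemma gauss_sq_integral : ∫ z : ℝ, z ^ 2 ∂(γ : Measure ℝ) = 1 := by
  rw [gaussianReal_of_var_ne_zero 0 one_ne_zero]
  have hmeas : Measurable (fun x : ℝ => (φ x).toNNReal) :=
    (measurable_gaussianPDFReal 0 1).real_toNNReal
  have hdens : (gaussianPDF 0 1) = fun x : ℝ => ((φ x).toNNReal : ℝ≥0∞) := by
    funext x
    rw [gaussianPDF, ENNReal.ofReal]
  rw [hdens, integral_withDensity_eq_integral_smul hmeas]
  have heq : (fun x : ℝ => ((φ x).toNNReal : ℝ≥0) • x ^ 2) =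
      fun x : ℝ => (Real.sqrt (2 * π))⁻¹ * (x ^ 2 * rexp (-(1/2) * x ^ 2)) := by
    funext x
    rw [NNReal.smul_def, Real.coe_toNNReal _ (gaussianPDFReal_nonneg 0 1 x), smul_eq_mul,
      phi_eq]
    ring
  rw [heq, integral_const_mul, sq_exp_integral, inv_mul_cancel₀]
  positivity


section LayerAux
variable {α : Type*} [MeasurableSpace α] {μ : Measure α} {g : α → ℝ}

lemma integrable_meas_lt_aux (hg : Integrable g μ) (hnn : 0 ≤ᵐ[μ] g) :
    IntegrableOn (fun t => (μ {a | t < g a}).toReal) (Ioi (0:ℝ)) := by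
  have hmeas : Measurable (fun t : ℝ => (μ {a | t < g a}).toReal) := by
    refine Measurable.ennreal_toReal ?_
    exact Antitone.measurable (fun _ _ hst => measure_mono (fun _ h => lt_of_le_of_lt hst h))
  refine ⟨hmeas.aestronglyMeasurable.restrict, ?_⟩
  rw [hasFiniteIntegral_iff_ofReal (ae_of_all _ (fun t => ENNReal.toReal_nonneg))]
  have hkey := lintegral_eq_lintegral_meas_lt μ hnn hg.aemeasurable
  have hfin : ∀ t ∈ Ioi (0:ℝ), μ {a | t < g a} ≠ ⊤ :=
    fun t ht => (hg.measure_gt_lt_top ht).ne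
  have : ∫⁻ t in Ioi (0:ℝ), ENNReal.ofReal ((μ {a | t < g a}).toReal)
      = ∫⁻ t in Ioi (0:ℝ), μ {a | t < g a} := by
    refine setLIntegral_congr_fun measurableSet_Ioi ?_
    exact fun t ht => ENNReal.ofReal_toReal (hfin t ht)
  rw [this, ← hkey]
  exact hg.lintegral_lt_top

end LayerAux
set_option maxHeartbeats 1000000 in
/-- **A bound on the scale-invariant quantity `C(X)`.**  For a mean-zero `X` with
variance `σ² > 0`, continuous density `f` and
`C(X) = inf_{p ∈ (0,1)} σ f(F_X⁻¹(p))/φ(Φ⁻¹(p))`, one has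
`C(X)² ≤ σ²/(σ² + median(X)²)`. -/
theorem C_le_median_bound
    {Ω : Type*} [MeasureSpace Ω] [IsProbabilityMeasure (ℙ : Measure Ω)]
    (X : Ω → ℝ) (hX : Measurable X)
    (σ : ℝ) (hσ : 0 < σ) (hmean : ℙ[X] = 0) (hvar : variance X ℙ = σ ^ 2)
    (f : ℝ → ℝ) (hf : Continuous f) (hf0 : ∀ x, 0 ≤ f x)
    (hdens : (ℙ : Measure Ω).map X = volume.withDensity (fun x => ENNReal.ofReal (f x)))
    (C : ℝ)
    (hC : C = ⨅ p : Set.Ioo (0:ℝ) 1,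
      σ * f (quantileFn (cdf ((ℙ : Measure Ω).map X)) p) /
        gaussianPDFReal 0 1 (quantileFn (cdf (gaussianReal 0 1)) p))
    (med : ℝ) (hmed : med = quantileFn (cdf ((ℙ : Measure Ω).map X)) (1 / 2)) :
    C ^ 2 ≤ σ ^ 2 / (σ ^ 2 + med ^ 2) := by
  classical
  haveI : Nonempty ↥(Set.Ioo (0:ℝ) 1) := ⟨⟨1/2, by norm_num⟩⟩
  set ν : Measure ℝ := (ℙ : Measure Ω).map X with hν
  haveI hνprob : IsProbabilityMeasure ν := Measure.isProbabilityMeasure_map hX.aemeasurable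
  have hden : (0:ℝ) < σ ^ 2 + med ^ 2 := by positivity
  have hCnn : 0 ≤ C := by
    rw [hC]
    exact le_ciInf fun p => div_nonneg (mul_nonneg hσ.le (hf0 _)) (gaussianPDFReal_nonneg _ _ _)
  rcases eq_or_lt_of_le hCnn with hC0 | hCpos
  · rw [← hC0]
    norm_num
    positivity
  set F : ℝ → ℝ := ⇑(cdf ν) with hF
  have hνd : ν = volume.withDensity (fun x => ENNReal.ofReal (f x)) := hdens
  have hFderiv : ∀ x, HasDerivAt F (f x) x := dens_hasDerivAt_cdf hf hf0 hνd
  have hFcont : Continuous F := dens_continuous_cdf hf hf0 hνd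
  have hQFQ : ∀ p : ℝ, 0 < p → p < 1 → F (quantileFn F p) = p :=
    fun p h0 h1 => cdf_quantileFn hFcont h0 h1
  set QΦ : ℝ → ℝ := quantileFn (⇑(cdf (gaussianReal 0 1))) with hQΦ
  set φf : ℝ → ℝ := gaussianPDFReal 0 1 with hφf
  -- pointwise bound from the infimum
  have hpt : ∀ p ∈ Ioo (0:ℝ) 1, C * φf (QΦ p) ≤ σ * f (quantileFn F p) := by
    intro p hp
    have hb : BddBelow (Set.range (fun p : ↥(Ioo (0:ℝ) 1) =>
        σ * f (quantileFn F p) / φf (QΦ p))) := by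
      refine ⟨0, ?_⟩
      rintro _ ⟨q, rfl⟩
      exact div_nonneg (mul_nonneg hσ.le (hf0 _)) (gaussianPDFReal_nonneg _ _ _)
    have hle : C ≤ σ * f (quantileFn F p) / φf (QΦ p) := by
      rw [hC]
      exact ciInf_le hb ⟨p, hp⟩
    have hφpos : 0 < φf (QΦ p) := gaussianPDFReal_pos _ _ _ one_ne_zero
    exact (le_div_iff₀ hφpos).1 hle
  set c : ℝ := C / σ with hc
  have hcpos : 0 < c := div_pos hCpos hσ
  -- F has no flat parts in (0,1): quantileFn is a left inverse
  have hQF : ∀ x : ℝ, 0 < F x → F x < 1 → quantileFn F (F x) = x := by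
    intro x h0 h1
    have hbdd : BddBelow {y | F x ≤ F y} := quantile_set_bddBelow h0
    have hmm : x ∈ {y | F x ≤ F y} := le_refl (F x)
    have hle : quantileFn F (F x) ≤ x := csInf_le hbdd hmm
    rcases eq_or_lt_of_le hle with heq | hlt
    · exact heq
    exfalso
    set x' := quantileFn F (F x) with hx'
    have hFx' : F x' = F x := hQFQ (F x) h0 h1
    have hfx' : 0 < f x' := by
      have h := hpt (F x) ⟨h0, h1⟩
      have hφpos : 0 < φf (QΦ (F x)) := gaussianPDFReal_pos _ _ _ one_ne_zero
      nlinarith [hf0 x']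
    obtain ⟨δ0, hδ0, hδ⟩ := Metric.continuousAt_iff.1 hf.continuousAt (f x' / 2) (by linarith)
    set δ := min (δ0 / 2) (x - x') with hδdef
    have hδpos : 0 < δ := lt_min (by linarith) (by linarith)
    have hδle : δ ≤ x - x' := min_le_right _ _
    have hδle2 : δ ≤ δ0 / 2 := min_le_left _ _
    have hlow : ∀ y ∈ Set.Icc x' (x' + δ), f x' / 2 ≤ f y := by
      intro y hy
      have hd : dist y x' < δ0 := by
        rw [Real.dist_eq, abs_of_nonneg (by linarith [hy.1])]
        linarith [hy.2]
      have h2 := hδ hd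
      rw [Real.dist_eq, abs_lt] at h2
      linarith
    have hint : F (x' + δ) - F x' = ∫ t in x'..(x' + δ), f t := dens_cdf_sub hf hf0 hνd _ _
    have hmono : ∫ _t in x'..(x'+δ), (f x' / 2) ≤ ∫ t in x'..(x'+δ), f t := by
      refine intervalIntegral.integral_mono_on (by linarith) intervalIntegrable_const
        ((dens_integrable hf hf0 hνd).intervalIntegrable) hlow
    rw [intervalIntegral.integral_const] at hmono
    simp only [smul_eq_mul] at hmono
    have hFle : F (x' + δ) ≤ F x := monotone_cdf ν (by linarith)
    nlinarith
  -- pointwise density bound on I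
  have hfI : ∀ x : ℝ, 0 < F x → F x < 1 → c * φf (QΦ (F x)) ≤ f x := by
    intro x h0 h1
    have h := hpt (F x) ⟨h0, h1⟩
    rw [hQF x h0 h1, mul_comm] at h
    rw [hc, div_mul_eq_mul_div, div_le_iff₀ hσ]
    linarith
  set ψ : ℝ → ℝ := fun x => QΦ (F x) with hψ
  set I : Set ℝ := F ⁻¹' (Ioo 0 1) with hI
  have hIopen : IsOpen I := isOpen_Ioo.preimage hFcont
  have hIconv : Convex ℝ I := by
    rw [convex_iff_ordConnected]
    constructor
    intro x hx y hy z hz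
    exact ⟨lt_of_lt_of_le hx.1 (monotone_cdf ν hz.1), lt_of_le_of_lt (monotone_cdf ν hz.2) hy.2⟩
  have hψd : ∀ x ∈ I, HasDerivAt ψ ((φf (ψ x))⁻¹ * f x) x := by
    intro x hx
    exact (Phi_quantile_hasDerivAt hx.1 hx.2).comp x (hFderiv x)
  set g2 : ℝ → ℝ := fun x => ψ x - c * x with hg2
  have hg2d : ∀ x ∈ I, HasDerivAt g2 ((φf (ψ x))⁻¹ * f x - c) x := by
    intro x hx
    have h2 : HasDerivAt (fun y : ℝ => c * y) c x := by
      simpa using (hasDerivAt_id x).const_mul c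
    exact (hψd x hx).sub h2
  have hg2mono : MonotoneOn g2 I := by
    refine monotoneOn_of_deriv_nonneg hIconv
      (fun x hx => (hg2d x hx).continuousAt.continuousWithinAt) ?_ ?_
    · rw [hIopen.interior_eq]
      exact fun x hx => (hg2d x hx).differentiableAt.differentiableWithinAt
    · rw [hIopen.interior_eq]
      intro x hx
      rw [(hg2d x hx).deriv]
      have hφ : 0 < φf (ψ x) := gaussianPDFReal_pos _ _ _ one_ne_zero
      have hb := hfI x hx.1 hx.2
      rw [sub_nonneg, inv_mul_eq_div, le_div_iff₀ hφ]
      exact hb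
  have hFmed : F med = 1/2 := by
    rw [hmed]
    exact hQFQ _ (by norm_num) (by norm_num)
  have hmedI : med ∈ I := by
    show F med ∈ Ioo (0:ℝ) 1
    rw [hFmed]
    constructor <;> norm_num
  have hψmed : ψ med = 0 := by
    show QΦ (F med) = 0
    rw [hFmed]
    exact Phi_quantile_half
  have hΦmono : Monotone ⇑(cdf (gaussianReal 0 1)) := Phi_strictMono.monotone
  -- CDF comparison bounds
  have hup : ∀ x : ℝ, med ≤ x → cdf (gaussianReal 0 1) (c * (x - med)) ≤ F x := by
    intro x hxm
    rcases lt_or_ge (F x) 1 with h1 | h1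
    · have h0 : 0 < F x := lt_of_lt_of_le (show (0:ℝ) < F med by rw [hFmed]; norm_num) (monotone_cdf ν hxm)
      have hxI : x ∈ I := ⟨h0, h1⟩
      have hmono := hg2mono hmedI hxI hxm
      have hψx : c * (x - med) ≤ ψ x := by
        simp only [hg2] at hmono
        nlinarith [hψmed]
      calc cdf (gaussianReal 0 1) (c * (x - med)) ≤ cdf (gaussianReal 0 1) (ψ x) := hΦmono hψx
      _ = F x := cdf_quantileFn Phi_cont h0 h1
    · have hfx1 : F x = 1 := le_antisymm (cdf_le_one ν x) h1
      rw [hfx1]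
      exact cdf_le_one _ _
  have hdown : ∀ x : ℝ, x ≤ med → F x ≤ cdf (gaussianReal 0 1) (c * (x - med)) := by
    intro x hxm
    rcases lt_or_ge 0 (F x) with h0 | h0
    · have h1 : F x < 1 := lt_of_le_of_lt (monotone_cdf ν hxm) (show F med < 1 by rw [hFmed]; norm_num)
      have hxI : x ∈ I := ⟨h0, h1⟩
      have hmono := hg2mono hxI hmedI hxm
      have hψx : ψ x ≤ c * (x - med) := by
        simp only [hg2] at hmono
        nlinarith [hψmed]
      calc F x = cdf (gaussianReal 0 1) (ψ x) := (cdf_quantileFn Phi_cont h0 h1).symm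
      _ ≤ cdf (gaussianReal 0 1) (c * (x - med)) := hΦmono hψx
    · have hfx0 : F x = 0 := le_antisymm (le_of_not_gt (by simpa using h0)) (cdf_nonneg ν x)
      rw [hfx0]
      exact cdf_nonneg _ _
  -- second moment of X
  have hmem2 : MemLp X 2 ℙ := by
    by_contra hmem
    have htop := evariance_eq_top hX.aestronglyMeasurable hmem
    have : variance X ℙ = 0 := by
      rw [variance, htop]
      simp
    rw [hvar] at this
    nlinarith
  have hintX : Integrable X ℙ := hmem2.integrable one_le_two
  have hintX2 : Integrable (fun ω => X ω ^ 2) ℙ := hmem2.integrable_sq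
  have hEX2 : ∫ ω, X ω ^ 2 ∂ℙ = σ ^ 2 := by
    have h := variance_eq_sub hmem2
    rw [hvar, hmean] at h
    simp only [Pi.pow_apply] at h
    nlinarith [h]
  have hintY : Integrable (fun ω => (X ω - med) ^ 2) ℙ := by
    simpa using (hmem2.sub (memLp_const med)).integrable_sq
  have hmomΩ : ∫ ω, (X ω - med) ^ 2 ∂ℙ = σ ^ 2 + med ^ 2 := by
    have hexp : (fun ω => (X ω - med) ^ 2)
        = fun ω => (X ω ^ 2 - 2 * med * X ω) + med ^ 2 := by
      funext ω
      ring
    have h1 : Integrable (fun ω => X ω ^ 2 - 2 * med * X ω) ℙ := by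
      exact hintX2.sub (hintX.const_mul (2 * med))
    have h2 : Integrable (fun ω : Ω => 2 * med * X ω) ℙ := hintX.const_mul (2 * med)
    rw [hexp, integral_add h1 (integrable_const _), integral_sub hintX2 h2,
      integral_const_mul, hmean, hEX2, integral_const]
    simp
  have hgm : AEStronglyMeasurable (fun x : ℝ => (x - med) ^ 2) (Measure.map X ℙ) := by
    apply Continuous.aestronglyMeasurable
    fun_prop
  have hmgν : Integrable (fun x : ℝ => (x - med) ^ 2) ν := by
    rw [hν, integrable_map_measure hgm hX.aemeasurable]
    exact hintY
  have hmomν : ∫ x, (x - med) ^ 2 ∂ν = σ ^ 2 + med ^ 2 := by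
    rw [hν, integral_map hX.aemeasurable hgm]
    exact hmomΩ
  -- layer cake on both sides
  have hlcν : ∫ x, (x - med) ^ 2 ∂ν = ∫ t in Ioi (0:ℝ), (ν {a | t < (a - med) ^ 2}).toReal :=
    hmgν.integral_eq_integral_meas_lt (ae_of_all _ fun x => sq_nonneg _)
  have hγint : Integrable (fun z : ℝ => (σ/C)^2 * z ^ 2) (gaussianReal 0 1) :=
    gauss_sq_integrable.const_mul _
  have hγnn : 0 ≤ᵐ[(gaussianReal 0 1 : Measure ℝ)] fun z : ℝ => (σ/C)^2 * z ^ 2 :=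
    ae_of_all _ fun z => by positivity
  have hlcγ : ∫ z, (σ/C)^2 * z ^ 2 ∂(gaussianReal 0 1)
      = ∫ t in Ioi (0:ℝ), ((gaussianReal 0 1 : Measure ℝ) {a | t < (σ/C)^2 * a ^ 2}).toReal :=
    hγint.integral_eq_integral_meas_lt hγnn
  have hγval : ∫ z, (σ/C)^2 * z ^ 2 ∂(gaussianReal 0 1) = (σ/C)^2 := by
    rw [integral_const_mul, gauss_sq_integral, mul_one]
  -- pointwise comparison of tail measures
  have hmeasle : ∀ t : ℝ, 0 < t →
      ν {a | t < (a - med) ^ 2} ≤ (gaussianReal 0 1 : Measure ℝ) {a | t < (σ/C)^2 * a ^ 2} := by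
    intro t ht
    set s := Real.sqrt t with hs
    have hspos : 0 < s := Real.sqrt_pos.2 ht
    have hsq : ∀ y : ℝ, t < y ^ 2 ↔ s < |y| := by
      intro y
      constructor
      · intro h
        have h2 := Real.sqrt_lt_sqrt ht.le h
        rwa [Real.sqrt_sq_eq_abs] at h2
      · intro h
        have h2 : s ^ 2 < |y| ^ 2 := by nlinarith [abs_nonneg y]
        rwa [Real.sq_sqrt ht.le, sq_abs] at h2
    have hνset : {a : ℝ | t < (a - med) ^ 2} = Iio (med - s) ∪ Ioi (med + s) := by
      ext a
      simp only [mem_setOf_eq, mem_union, mem_Iio, mem_Ioi]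
      rw [hsq (a - med), lt_abs]
      constructor
      · rintro (h | h)
        · right; linarith
        · left; linarith
      · rintro (h | h)
        · right; linarith
        · left; linarith
    have hq : σ / C = c⁻¹ := by
      rw [hc, inv_div]
    have hγset : {a : ℝ | t < (σ/C)^2 * a ^ 2} = Iio (-(c * s)) ∪ Ioi (c * s) := by
      ext a
      simp only [mem_setOf_eq, mem_union, mem_Iio, mem_Ioi]
      have hkey : t < (σ/C)^2 * a ^ 2 ↔ s < (σ/C) * |a| := by
        have h1 : (σ/C)^2 * a ^ 2 = ((σ/C) * |a|) ^ 2 := by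
          rw [mul_pow, sq_abs]
        rw [h1, hsq ((σ/C) * |a|), abs_of_nonneg (by positivity)]
      rw [hkey, hq, inv_mul_eq_div, lt_div_iff₀ hcpos, mul_comm s c, lt_abs]
      constructor
      · rintro (h | h)
        · right
          exact h
        · left
          linarith
      · rintro (h | h)
        · right
          linarith
        · left
          linarith
    have hd1 : Disjoint (Iio (med - s)) (Ioi (med + s)) := by
      rw [Set.disjoint_left]
      intro a ha hb
      simp only [mem_Iio] at ha
      simp only [mem_Ioi] at hb
      linarith
    have hd2 : Disjoint (Iio (-(c * s))) (Ioi (c * s)) := by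
      rw [Set.disjoint_left]
      intro a ha hb
      simp only [mem_Iio] at ha
      simp only [mem_Ioi] at hb
      nlinarith
    rw [hνset, hγset, measure_union hd1 measurableSet_Ioi, measure_union hd2 measurableSet_Ioi,
      dens_measure_Iio hνd, dens_measure_Ioi hνd, dens_measure_Iio gauss_dens,
      dens_measure_Ioi gauss_dens]
    have hb1 : F (med - s) ≤ cdf (gaussianReal 0 1) (-(c * s)) := by
      have h := hdown (med - s) (by linarith)
      have e1 : c * ((med - s) - med) = -(c * s) := by ring
      rwa [e1] at h
    have hb2 : cdf (gaussianReal 0 1) (c * s) ≤ F (med + s) := by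
      have h := hup (med + s) (by linarith)
      have e2 : c * ((med + s) - med) = c * s := by ring
      rwa [e2] at h
    exact add_le_add (ENNReal.ofReal_le_ofReal hb1)
      (tsub_le_tsub_left (ENNReal.ofReal_le_ofReal hb2) 1)
  have hineq : ∫ t in Ioi (0:ℝ), (ν {a | t < (a - med) ^ 2}).toReal
      ≤ ∫ t in Ioi (0:ℝ), ((gaussianReal 0 1 : Measure ℝ) {a | t < (σ/C)^2 * a ^ 2}).toReal := by
    refine integral_mono_of_nonneg (ae_of_all _ fun t => ENNReal.toReal_nonneg)
      (integrable_meas_lt_aux hγint hγnn) ?_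
    filter_upwards [ae_restrict_mem measurableSet_Ioi] with t ht
    exact ENNReal.toReal_mono (measure_ne_top _ _) (hmeasle t ht)
  have hfinal : σ ^ 2 + med ^ 2 ≤ (σ/C)^2 := by
    rw [← hmomν, hlcν, ← hγval, hlcγ]
    exact hineq
  rw [le_div_iff₀ hden]
  have h2 : (σ/C)^2 = σ^2 / C^2 := div_pow σ C 2
  rw [h2] at hfinal
  have hC2 : (0:ℝ) < C^2 := by positivity
  rw [le_div_iff₀ hC2] at hfinal
  rw [mul_comm]
  exact hfinal
end
end

section
/- Let X be a random variable with distribution function F_X and density f_X, and let φ and Φ be the standard normal density and distribution function. If there exist c > 0 and ε > 0 such that f_X(F_X^{-1}(p)) ~ c(1−p)^{1−ε} as p → 1, then f_X(F_X^{-1}(p))/φ(Φ^{-1}(p)) → ∞ as p → 1. Correspondingly, if f_X(F_X^{-1}(p)) ~ c·p^{1−ε} as p → 0, then f_X(F_X^{-1}(p))/φ(Φ^{-1}(p)) → ∞ as p → 0. -/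
open MeasureTheory ProbabilityTheory Filter Asymptotics
open scoped ENNReal NNReal Topology

noncomputable section

section Aux
open Real Set

lemma pdf_eq (x : ℝ) : gaussianPDFReal 0 1 x = (Real.sqrt (2*π))⁻¹ * rexp (-x^2/2) := by
  simp [gaussianPDFReal]

lemma stdCDF_eq (x : ℝ) :
    cdf (gaussianReal 0 1) x = ∫ t in Iic x, gaussianPDFReal 0 1 t := by
  rw [cdf_eq_real, measureReal_def, gaussianReal_apply_eq_integral _ one_ne_zero,
    ENNReal.toReal_ofReal]
  exact integral_nonneg fun t => gaussianPDFReal_nonneg _ _ _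

lemma stdCDF_sub (a b : ℝ) :
    cdf (gaussianReal 0 1) b - cdf (gaussianReal 0 1) a
      = ∫ t in a..b, gaussianPDFReal 0 1 t := by
  rw [stdCDF_eq, stdCDF_eq]
  exact intervalIntegral.integral_Iic_sub_Iic ((integrable_gaussianPDFReal 0 1).restrict)
    ((integrable_gaussianPDFReal 0 1).restrict)

lemma tail_lower {x : ℝ} (hx : 0 ≤ x) :
    gaussianPDFReal 0 1 (x + 1) ≤ 1 - cdf (gaussianReal 0 1) x := by
  have h1 : cdf (gaussianReal 0 1) (x+1) - cdf (gaussianReal 0 1) x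
      = ∫ t in x..(x+1), gaussianPDFReal 0 1 t := stdCDF_sub x (x+1)
  have h2 : (∫ t in x..(x+1), (fun _ => gaussianPDFReal 0 1 (x+1)) t)
      ≤ ∫ t in x..(x+1), gaussianPDFReal 0 1 t := by
    apply intervalIntegral.integral_mono_on (by linarith)
      intervalIntegrable_const ((integrable_gaussianPDFReal 0 1).intervalIntegrable)
    intro t ht
    rw [pdf_eq, pdf_eq]
    apply mul_le_mul_of_nonneg_left _ (by positivity)
    apply Real.exp_le_exp.mpr
    have h3 : t^2 ≤ (x+1)^2 := by
      have := ht.1; have := ht.2; nlinarith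
    linarith
  rw [intervalIntegral.integral_const] at h2
  have h4 : cdf (gaussianReal 0 1) (x+1) ≤ 1 := cdf_le_one _ _
  simp only [smul_eq_mul] at h2
  have : (x + 1 - x) = 1 := by ring
  rw [this, one_mul] at h2
  linarith

lemma head_lower {x : ℝ} (hx : x ≤ 0) :
    gaussianPDFReal 0 1 (x - 1) ≤ cdf (gaussianReal 0 1) x := by
  have h1 : cdf (gaussianReal 0 1) x - cdf (gaussianReal 0 1) (x-1)
      = ∫ t in (x-1)..x, gaussianPDFReal 0 1 t := stdCDF_sub (x-1) x
  have h2 : (∫ t in (x-1)..x, (fun _ => gaussianPDFReal 0 1 (x-1)) t)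
      ≤ ∫ t in (x-1)..x, gaussianPDFReal 0 1 t := by
    apply intervalIntegral.integral_mono_on (by linarith)
      intervalIntegrable_const ((integrable_gaussianPDFReal 0 1).intervalIntegrable)
    intro t ht
    rw [pdf_eq, pdf_eq]
    apply mul_le_mul_of_nonneg_left _ (by positivity)
    apply Real.exp_le_exp.mpr
    have h3 : t^2 ≤ (x-1)^2 := by
      have := ht.1; have := ht.2; nlinarith
    linarith
  rw [intervalIntegral.integral_const] at h2
  have h4 : 0 ≤ cdf (gaussianReal 0 1) (x-1) := cdf_nonneg _ _
  simp only [smul_eq_mul] at h2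
  have : (x - (x-1)) = 1 := by ring
  rw [this, one_mul] at h2
  linarith

/-- quadratic with positive leading coefficient tends to infinity. -/
lemma quad_atTop {a b c : ℝ} (ha : 0 < a) :
    Tendsto (fun x : ℝ => a*x^2 + b*x + c) atTop atTop := by
  have h : Tendsto (fun x : ℝ => x * (a*x + b) + c) atTop atTop := by
    apply Filter.tendsto_atTop_add_const_right
    exact Tendsto.atTop_mul_atTop₀ tendsto_id
      (tendsto_atTop_add_const_right _ b (tendsto_id.const_mul_atTop ha))
  exact h.congr (by intro x; ring)

lemma quad_atBot {a b c : ℝ} (ha : 0 < a) :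
    Tendsto (fun x : ℝ => a*x^2 + b*x + c) atBot atTop := by
  have h := (quad_atTop (a := a) (b := -b) (c := c) ha).comp tendsto_neg_atBot_atTop
  exact h.congr (by intro x; simp only [Function.comp_apply]; ring_nf)

/-- core growth lemma: `C * (φ (x+d))^δ / φ x → ∞` for `0 ≤ δ < 1`. -/
lemma pdf_ratio_atTop {C δ d : ℝ} (hC : 0 < C) (hδ0 : 0 ≤ δ) (hδ1 : δ < 1) :
    Tendsto (fun x => C * (gaussianPDFReal 0 1 (x + d)) ^ δ / gaussianPDFReal 0 1 x)
      atTop atTop := by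
  have hK : (0:ℝ) < (Real.sqrt (2*π))⁻¹ := by positivity
  have heq : ∀ x : ℝ, C * (gaussianPDFReal 0 1 (x + d)) ^ δ / gaussianPDFReal 0 1 x
      = (C * ((Real.sqrt (2*π))⁻¹)^δ * Real.sqrt (2*π)) *
        rexp ((1-δ)/2 * x^2 + (-δ*d) * x + (-δ*d^2/2)) := by
    intro x
    have hx : rexp (-(x+d)^2/2 * δ)
        = rexp ((1-δ)/2*x^2 + (-δ*d)*x + (-δ*d^2/2)) * rexp (-x^2/2) := by
      rw [← Real.exp_add]; congr 1; ring
    rw [pdf_eq, pdf_eq, Real.mul_rpow hK.le (Real.exp_nonneg _), ← Real.exp_mul, hx]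
    have h1 : rexp (-x^2/2) ≠ 0 := (Real.exp_pos _).ne'
    have h2 : Real.sqrt (2*π) ≠ 0 := by positivity
    field_simp
  rw [funext heq]
  apply Tendsto.const_mul_atTop (by positivity)
  exact tendsto_exp_atTop.comp (quad_atTop (by linarith))

lemma pdf_ratio_atBot {C δ d : ℝ} (hC : 0 < C) (hδ0 : 0 ≤ δ) (hδ1 : δ < 1) :
    Tendsto (fun x => C * (gaussianPDFReal 0 1 (x + d)) ^ δ / gaussianPDFReal 0 1 x)
      atBot atTop := by
  have hK : (0:ℝ) < (Real.sqrt (2*π))⁻¹ := by positivity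
  have heq : ∀ x : ℝ, C * (gaussianPDFReal 0 1 (x + d)) ^ δ / gaussianPDFReal 0 1 x
      = (C * ((Real.sqrt (2*π))⁻¹)^δ * Real.sqrt (2*π)) *
        rexp ((1-δ)/2 * x^2 + (-δ*d) * x + (-δ*d^2/2)) := by
    intro x
    have hx : rexp (-(x+d)^2/2 * δ)
        = rexp ((1-δ)/2*x^2 + (-δ*d)*x + (-δ*d^2/2)) * rexp (-x^2/2) := by
      rw [← Real.exp_add]; congr 1; ring
    rw [pdf_eq, pdf_eq, Real.mul_rpow hK.le (Real.exp_nonneg _), ← Real.exp_mul, hx]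
    have h1 : rexp (-x^2/2) ≠ 0 := (Real.exp_pos _).ne'
    have h2 : Real.sqrt (2*π) ≠ 0 := by positivity
    field_simp
  rw [funext heq]
  apply Tendsto.const_mul_atTop (by positivity)
  exact tendsto_exp_atTop.comp (quad_atBot (by linarith))

lemma stdCDF_continuous : Continuous (cdf (gaussianReal 0 1)) := by
  have h := (integrable_gaussianPDFReal 0 1).continuous_primitive (a := 0)
  have : (fun b => cdf (gaussianReal 0 1) b)
      = fun b => (∫ t in (0:ℝ)..b, gaussianPDFReal 0 1 t) + cdf (gaussianReal 0 1) 0 := by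
    funext b
    rw [← stdCDF_sub]; ring
  rw [show (cdf (gaussianReal 0 1) : ℝ → ℝ) = fun b => cdf (gaussianReal 0 1) b from rfl, this]
  exact h.add continuous_const


lemma stdCDF_strictMono : StrictMono (cdf (gaussianReal 0 1)) := by
  intro a b hab
  have h : 0 < ∫ t in a..b, gaussianPDFReal 0 1 t := by
    apply intervalIntegral.intervalIntegral_pos_of_pos_on
    · exact (integrable_gaussianPDFReal 0 1).intervalIntegrable
    · exact fun t _ => gaussianPDFReal_pos _ _ _ one_ne_zero
    · exact hab
  have := stdCDF_sub a b
  linarith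

variable {F : ℝ → ℝ} {p : ℝ}

lemma exists_lt (hm : Monotone F) (h0 : Tendsto F atBot (𝓝 0)) (hp0 : 0 < p) :
    ∃ a, F a < p := (h0.eventually (eventually_lt_nhds hp0)).exists

lemma exists_gt (h1 : Tendsto F atTop (𝓝 1)) (hp1 : p < 1) :
    ∃ b, p < F b := (h1.eventually (eventually_gt_nhds hp1)).exists

lemma quantile_set_nonempty_s12 (h1 : Tendsto F atTop (𝓝 1)) (hp1 : p < 1) :
    {x | p ≤ F x}.Nonempty := by
  obtain ⟨b, hb⟩ := exists_gt h1 hp1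
  exact ⟨b, hb.le⟩

lemma quantile_set_bddBelow_s12 (hm : Monotone F) (h0 : Tendsto F atBot (𝓝 0)) (hp0 : 0 < p) :
    BddBelow {x | p ≤ F x} := by
  obtain ⟨a, ha⟩ := exists_lt hm h0 hp0
  refine ⟨a, fun y hy => ?_⟩
  by_contra h
  exact absurd (le_trans hy (hm (le_of_not_ge h))) (not_le.mpr ha)

lemma quantile_inv (hF : Continuous F) (hm : StrictMono F)
    (h0 : Tendsto F atBot (𝓝 0)) (h1 : Tendsto F atTop (𝓝 1))
    (hp0 : 0 < p) (hp1 : p < 1) : F (quantileFn F p) = p := by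
  obtain ⟨a, ha⟩ := exists_lt hm.monotone h0 hp0
  obtain ⟨b, hb⟩ := exists_gt h1 hp1
  obtain ⟨x0, hx0⟩ : p ∈ range F := intermediate_value_univ a b hF ⟨ha.le, hb.le⟩
  have hne : {x | p ≤ F x}.Nonempty := ⟨x0, hx0.ge⟩
  have hbdd := quantile_set_bddBelow_s12 hm.monotone h0 hp0
  have hcl : IsClosed {x | p ≤ F x} := isClosed_le continuous_const hF
  have hmem : quantileFn F p ∈ {x | p ≤ F x} := hcl.csInf_mem hne hbdd
  have hle : quantileFn F p ≤ x0 := csInf_le hbdd hx0.ge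
  exact le_antisymm ((hm.monotone hle).trans_eq hx0) hmem

lemma quantile_tendsto_atTop (hm : StrictMono F)
    (h0 : Tendsto F atBot (𝓝 0)) (h1 : Tendsto F atTop (𝓝 1)) :
    Tendsto (quantileFn F) (𝓝[<] (1:ℝ)) atTop := by
  rw [tendsto_atTop]
  intro M
  have h2 : F (M + 1) ≤ 1 := ge_of_tendsto h1 (by
    filter_upwards [eventually_ge_atTop (M + 1)] with b hb using hm.monotone hb)
  have hFM : F M < 1 := lt_of_lt_of_le (hm (lt_add_one M)) h2
  filter_upwards [Ioo_mem_nhdsLT_of_mem (show (1:ℝ) ∈ Ioc (F M) 1 from ⟨hFM, le_rfl⟩)]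
    with p hp
  refine le_csInf (quantile_set_nonempty_s12 h1 hp.2) fun y hy => ?_
  by_contra h
  exact absurd (le_trans hy (hm.monotone (le_of_not_ge h))) (not_le.mpr hp.1)

lemma quantile_tendsto_atBot (hm : StrictMono F)
    (h0 : Tendsto F atBot (𝓝 0)) (h1 : Tendsto F atTop (𝓝 1)) :
    Tendsto (quantileFn F) (𝓝[>] (0:ℝ)) atBot := by
  rw [tendsto_atBot]
  intro M
  have h2 : 0 ≤ F (M - 1) := le_of_tendsto h0 (by
    filter_upwards [eventually_le_atBot (M - 1)] with b hb using hm.monotone hb)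
  have hFM : 0 < F M := lt_of_le_of_lt h2 (hm (by linarith))
  filter_upwards [Ioo_mem_nhdsGT_of_mem (show (0:ℝ) ∈ Ico 0 (F M) from ⟨le_rfl, hFM⟩)]
    with p hp
  exact csInf_le (quantile_set_bddBelow_s12 hm.monotone h0 hp.1) hp.2.le

lemma keyTop {c ε : ℝ} (hc : 0 < c) (hε : 0 < ε) :
    Tendsto (fun x => c * (1 - cdf (gaussianReal 0 1) x) ^ (1 - ε) / gaussianPDFReal 0 1 x)
      atTop atTop := by
  set δ : ℝ := max (1 - ε) 0 with hδ
  have hδ0 : 0 ≤ δ := le_max_right _ _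
  have hδ1 : δ < 1 := max_lt (by linarith) one_pos
  apply tendsto_atTop_mono' atTop _ (pdf_ratio_atTop (d := 1) hc hδ0 hδ1)
  filter_upwards [eventually_ge_atTop (0:ℝ)] with x hx
  have hφpos : 0 < gaussianPDFReal 0 1 x := gaussianPDFReal_pos _ _ _ one_ne_zero
  have hp : 0 < gaussianPDFReal 0 1 (x + 1) := gaussianPDFReal_pos _ _ _ one_ne_zero
  have hl : gaussianPDFReal 0 1 (x + 1) ≤ 1 - cdf (gaussianReal 0 1) x := tail_lower hx
  have ht1 : 1 - cdf (gaussianReal 0 1) x ≤ 1 := by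
    have := cdf_nonneg (gaussianReal 0 1) x; linarith
  have key : (gaussianPDFReal 0 1 (x + 1)) ^ δ
      ≤ (1 - cdf (gaussianReal 0 1) x) ^ (1 - ε) := by
    rcases le_or_gt ε 1 with h | h
    · rw [hδ, max_eq_left (by linarith)]
      exact Real.rpow_le_rpow hp.le hl (by linarith)
    · rw [hδ, max_eq_right (by linarith), Real.rpow_zero]
      exact Real.one_le_rpow_of_pos_of_le_one_of_nonpos (lt_of_lt_of_le hp hl) ht1
        (by linarith)
  gcongr

lemma keyBot {c ε : ℝ} (hc : 0 < c) (hε : 0 < ε) :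
    Tendsto (fun x => c * (cdf (gaussianReal 0 1) x) ^ (1 - ε) / gaussianPDFReal 0 1 x)
      atBot atTop := by
  set δ : ℝ := max (1 - ε) 0 with hδ
  have hδ0 : 0 ≤ δ := le_max_right _ _
  have hδ1 : δ < 1 := max_lt (by linarith) one_pos
  apply tendsto_atTop_mono' atBot _ (pdf_ratio_atBot (d := -1) hc hδ0 hδ1)
  filter_upwards [eventually_le_atBot (0:ℝ)] with x hx
  have hφpos : 0 < gaussianPDFReal 0 1 x := gaussianPDFReal_pos _ _ _ one_ne_zero
  have hp : 0 < gaussianPDFReal 0 1 (x + -1) := gaussianPDFReal_pos _ _ _ one_ne_zero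
  have hl : gaussianPDFReal 0 1 (x + -1) ≤ cdf (gaussianReal 0 1) x := by
    have := head_lower hx
    rwa [sub_eq_add_neg] at this
  have ht1 : cdf (gaussianReal 0 1) x ≤ 1 := cdf_le_one _ _
  have key : (gaussianPDFReal 0 1 (x + -1)) ^ δ
      ≤ (cdf (gaussianReal 0 1) x) ^ (1 - ε) := by
    rcases le_or_gt ε 1 with h | h
    · rw [hδ, max_eq_left (by linarith)]
      exact Real.rpow_le_rpow hp.le hl (by linarith)
    · rw [hδ, max_eq_right (by linarith), Real.rpow_zero]
      exact Real.one_le_rpow_of_pos_of_le_one_of_nonpos (lt_of_lt_of_le hp hl) ht1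
        (by linarith)
  gcongr

end Aux


open Real Set in
/-- **Polynomial tails beat Gaussian tails.**  If `f_X(F_X⁻¹(p)) ∼ c(1−p)^{1−ε}` as
`p → 1⁻`, then `f_X(F_X⁻¹(p))/φ(Φ⁻¹(p)) → ∞` as `p → 1⁻`; correspondingly if
`f_X(F_X⁻¹(p)) ∼ c p^{1−ε}` as `p → 0⁺`, then `f_X(F_X⁻¹(p))/φ(Φ⁻¹(p)) → ∞` as
`p → 0⁺`. -/
theorem density_quantile_ratio_tendsto_atTop
    {Ω : Type*} [MeasureSpace Ω] [IsProbabilityMeasure (ℙ : Measure Ω)]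
    (X : Ω → ℝ) (hX : Measurable X)
    (f : ℝ → ℝ) (hf0 : ∀ x, 0 ≤ f x)
    (hdens : (ℙ : Measure Ω).map X = volume.withDensity (fun x => ENNReal.ofReal (f x)))
    (c ε : ℝ) (hc : 0 < c) (hε : 0 < ε) :
    (((fun p => f (quantileFn (cdf ((ℙ : Measure Ω).map X)) p)) ~[𝓝[<] (1:ℝ)]
        (fun p => c * (1 - p) ^ (1 - ε))) →
      Tendsto (fun p => f (quantileFn (cdf ((ℙ : Measure Ω).map X)) p) /
          gaussianPDFReal 0 1 (quantileFn (cdf (gaussianReal 0 1)) p))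
        (𝓝[<] (1:ℝ)) atTop) ∧
    (((fun p => f (quantileFn (cdf ((ℙ : Measure Ω).map X)) p)) ~[𝓝[>] (0:ℝ)]
        (fun p => c * p ^ (1 - ε))) →
      Tendsto (fun p => f (quantileFn (cdf ((ℙ : Measure Ω).map X)) p) /
          gaussianPDFReal 0 1 (quantileFn (cdf (gaussianReal 0 1)) p))
        (𝓝[>] (0:ℝ)) atTop) := by
  have h0 : Tendsto (cdf (gaussianReal 0 1)) atBot (𝓝 0) := tendsto_cdf_atBot _
  have h1 : Tendsto (cdf (gaussianReal 0 1)) atTop (𝓝 1) := tendsto_cdf_atTop _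
  set u : ℝ → ℝ := fun p => f (quantileFn (cdf ((ℙ : Measure Ω).map X)) p) with hu
  set q : ℝ → ℝ := quantileFn (cdf (gaussianReal 0 1)) with hq
  constructor
  · intro h
    have hq1 : Tendsto q (𝓝[<] (1:ℝ)) atTop :=
      quantile_tendsto_atTop stdCDF_strictMono h0 h1
    have hT : Tendsto (fun p => c * (1 - p) ^ (1 - ε) / gaussianPDFReal 0 1 (q p))
        (𝓝[<] (1:ℝ)) atTop := by
      apply ((keyTop hc hε).comp hq1).congr'
      filter_upwards [Ioo_mem_nhdsLT_of_mem
        (show (1:ℝ) ∈ Ioc (0:ℝ) 1 from ⟨one_pos, le_rfl⟩)] with p hp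
      have hinv : cdf (gaussianReal 0 1) (q p) = p :=
        quantile_inv stdCDF_continuous stdCDF_strictMono h0 h1 hp.1 hp.2
      simp only [Function.comp_apply, hinv]
    have hg0 : ∀ᶠ p in 𝓝[<] (1:ℝ), c * (1 - p) ^ (1 - ε) ≠ 0 := by
      filter_upwards [Ioo_mem_nhdsLT_of_mem
        (show (1:ℝ) ∈ Ioc (0:ℝ) 1 from ⟨one_pos, le_rfl⟩)] with p hp
      have : (0:ℝ) < (1 - p) ^ (1 - ε) := Real.rpow_pos_of_pos (by linarith [hp.2]) _
      positivity
    have h1' : Tendsto (fun p => u p / (c * (1 - p) ^ (1 - ε))) (𝓝[<] (1:ℝ)) (𝓝 1) :=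
      (isEquivalent_iff_tendsto_one hg0).mp h
    have hmul := h1'.pos_mul_atTop one_pos hT
    apply hmul.congr'
    filter_upwards [hg0] with p hgp
    have hφ : gaussianPDFReal 0 1 (q p) ≠ 0 :=
      (gaussianPDFReal_pos _ _ _ one_ne_zero).ne'
    field_simp
    exact mul_div_cancel_right₀ _ (right_ne_zero_of_mul hgp)
  · intro h
    have hq1 : Tendsto q (𝓝[>] (0:ℝ)) atBot :=
      quantile_tendsto_atBot stdCDF_strictMono h0 h1
    have hT : Tendsto (fun p => c * p ^ (1 - ε) / gaussianPDFReal 0 1 (q p))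
        (𝓝[>] (0:ℝ)) atTop := by
      apply ((keyBot hc hε).comp hq1).congr'
      filter_upwards [Ioo_mem_nhdsGT_of_mem
        (show (0:ℝ) ∈ Ico (0:ℝ) 1 from ⟨le_rfl, one_pos⟩)] with p hp
      have hinv : cdf (gaussianReal 0 1) (q p) = p :=
        quantile_inv stdCDF_continuous stdCDF_strictMono h0 h1 hp.1 hp.2
      simp only [Function.comp_apply, hinv]
    have hg0 : ∀ᶠ p in 𝓝[>] (0:ℝ), c * p ^ (1 - ε) ≠ 0 := by
      filter_upwards [Ioo_mem_nhdsGT_of_mem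
        (show (0:ℝ) ∈ Ico (0:ℝ) 1 from ⟨le_rfl, one_pos⟩)] with p hp
      have : (0:ℝ) < p ^ (1 - ε) := Real.rpow_pos_of_pos hp.1 _
      positivity
    have h1' : Tendsto (fun p => u p / (c * p ^ (1 - ε))) (𝓝[>] (0:ℝ)) (𝓝 1) :=
      (isEquivalent_iff_tendsto_one hg0).mp h
    have hmul := h1'.pos_mul_atTop one_pos hT
    apply hmul.congr'
    filter_upwards [hg0] with p hgp
    have hφ : gaussianPDFReal 0 1 (q p) ≠ 0 :=
      (gaussianPDFReal_pos _ _ _ one_ne_zero).ne'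
    field_simp
    exact mul_div_cancel_right₀ _ (right_ne_zero_of_mul hgp)
end
end
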